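/- Let D be a dimension type with dim D = n, where n ≥ 1. Then dim(D ⊞ D) = 2n − 1 if and only if D ≤ B_n; otherwise dim(D ⊞ D) = 2n. (This is the combinatorial counterpart of the paper's remark that an n-dimensional compactum X is a Boltyanskii compactum, i.e. dim(X × X) = 2·dim X − 1, if and only if d_X ≤ B_n.) -/

import Mathlib

/-!
On the diagonal, `D ⊞ D` doubles `D` at `ℚ` and at `ℤ_p`, while at `ℤ_{p^∞}` and `ℤ_{(p)}` it is
bounded by `max (2 D(ℚ)) (2 D(ℤ_p))` and `max (2 D(ℚ)) (D(ℤ_p) + D(ℤ_{(p)}))`. Hence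
`D ⊞ D ≤ 2n` always, and `D ⊞ D ≤ 2n - 1` when `D ≤ B_n`. If `D ≰ B_n`, then `D` attains `n` at
`ℚ` or at some `ℤ_p` (a value `n` at `ℤ_{p^∞}` propagates to one of them), so `D ⊞ D` attains `2n`.
If `D ≤ B_n`, then `D` can attain `n` only at some `ℤ_{(p)}`, which forces `D` to be
`p⁺`-singular with `D(ℤ_p) = n - 1`, and then `(D ⊞ D)(ℤ_{(p)}) = 2n - 1`.
-/

/-- The Bockstein index set σ: the symbol ℚ together with, for every prime `p`,
the symbols ℤ_p, ℤ_{p^∞} and ℤ_{(p)}. -/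
inductive Bock : Type
  | Q : Bock
  | Zp (p : Nat.Primes) : Bock
  | ZpInf (p : Nat.Primes) : Bock
  | Zloc (p : Nat.Primes) : Bock

/-- `D` is `p`-regular: `D(ℤ_{(p)}) = D(ℤ_p) = D(ℤ_{p^∞}) = D(ℚ)`. -/
def pRegular (D : Bock → ℕ) (p : Nat.Primes) : Prop :=
  D (.Zloc p) = D (.Zp p) ∧ D (.Zp p) = D (.ZpInf p) ∧ D (.ZpInf p) = D .Q

/-- `D` is `p⁺`-singular: `D(ℤ_{p^∞}) = D(ℤ_p)` and
`D(ℤ_{(p)}) = max (D(ℚ)) (D(ℤ_{p^∞}) + 1)`. -/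
def pPlusSingular (D : Bock → ℕ) (p : Nat.Primes) : Prop :=
  D (.ZpInf p) = D (.Zp p) ∧ D (.Zloc p) = max (D .Q) (D (.ZpInf p) + 1)

/-- `D` is `p⁻`-singular: `D(ℤ_p) ≥ 1`, `D(ℤ_{p^∞}) = D(ℤ_p) - 1` and
`D(ℤ_{(p)}) = max (D(ℚ)) (D(ℤ_{p^∞}) + 1)`. -/
def pMinusSingular (D : Bock → ℕ) (p : Nat.Primes) : Prop :=
  1 ≤ D (.Zp p) ∧ D (.ZpInf p) = D (.Zp p) - 1 ∧
    D (.Zloc p) = max (D .Q) (D (.ZpInf p) + 1)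

instance (D : Bock → ℕ) (p : Nat.Primes) : Decidable (pRegular D p) := by
  unfold pRegular; infer_instance

instance (D : Bock → ℕ) (p : Nat.Primes) : Decidable (pPlusSingular D p) := by
  unfold pPlusSingular; infer_instance

instance (D : Bock → ℕ) (p : Nat.Primes) : Decidable (pMinusSingular D p) := by
  unfold pMinusSingular; infer_instance

/-- A dimension type: for every prime `p`, `D` is `p`-regular, `p⁺`-singular
or `p⁻`-singular. -/
def DimensionType (D : Bock → ℕ) : Prop :=
  ∀ p : Nat.Primes, pRegular D p ∨ pPlusSingular D p ∨ pMinusSingular D p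

/-- The `p`-singularity sign ε of `D`: `+1` if `p⁺`-singular, `-1` if
`p⁻`-singular, `0` otherwise (i.e. `p`-regular, for dimension types). -/
def bsign (D : Bock → ℕ) (p : Nat.Primes) : ℤ :=
  if pPlusSingular D p then 1 else if pMinusSingular D p then -1 else 0

/-- The product of signs: `ε⊗0 = 0⊗ε = ε`, `ε⊗ε = ε`, `+⊗− = −⊗+ = −`. -/
def signMul (a b : ℤ) : ℤ :=
  if a = 0 then b else if b = 0 then a else if a = b then a else -1

/-- The operation `D₁ ⊞ D₂` suggested by the Bockstein product theorem. -/
def boxplus (D₁ D₂ : Bock → ℕ) : Bock → ℕ := fun G =>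
  match G with
  | .Q => D₁ .Q + D₂ .Q
  | .Zp p => D₁ (.Zp p) + D₂ (.Zp p)
  | .ZpInf p =>
      let e := signMul (bsign D₁ p) (bsign D₂ p)
      let q := D₁ .Q + D₂ .Q
      let s := D₁ (.Zp p) + D₂ (.Zp p)
      if e = 0 then q else if e = 1 then s else s - 1
  | .Zloc p =>
      let e := signMul (bsign D₁ p) (bsign D₂ p)
      let q := D₁ .Q + D₂ .Q
      let s := D₁ (.Zp p) + D₂ (.Zp p)
      if e = 0 then q else if e = 1 then max q (s + 1) else max q s

/-- The involution `D ↦ D*` exchanging the decorations `+` and `−`. -/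
def dual (D : Bock → ℕ) : Bock → ℕ := fun G =>
  match G with
  | .Q => D .Q
  | .Zp p => D (.Zp p)
  | .ZpInf p =>
      if pPlusSingular D p then D (.Zp p) - 1
      else if pMinusSingular D p then D (.Zp p)
      else D (.ZpInf p)
  | .Zloc p =>
      if pPlusSingular D p then max (D .Q) (D (.Zp p))
      else if pMinusSingular D p then max (D .Q) (D (.Zp p) + 1)
      else D (.Zloc p)

/-- The operation `D₁ ⊕ D₂ = (D₁* ⊞ D₂*)*`. -/
def oplus (D₁ D₂ : Bock → ℕ) : Bock → ℕ :=
  dual (boxplus (dual D₁) (dual D₂))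

/-- The pointwise order on functions `σ → ℕ`. -/
def dle (D D' : Bock → ℕ) : Prop := ∀ G, D G ≤ D' G

/-- `dim D = n`: `D(G) ≤ n` for every `G ∈ σ` and `D(G) = n` for some `G ∈ σ`. -/
def dimEq (D : Bock → ℕ) (n : ℕ) : Prop :=
  (∀ G, D G ≤ n) ∧ ∃ G, D G = n


/-- The function B_n: B_n(ℚ) = B_n(ℤ_p) = B_n(ℤ_{p^∞}) = n − 1 and
B_n(ℤ_{(p)}) = n for every prime p. -/
def Bolt (n : ℕ) : Bock → ℕ := fun G =>
  match G with
  | .Zloc _ => n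
  | _ => n - 1

section

variable {D : Bock → ℕ} {p : Nat.Primes} {n : ℕ}

theorem pPlusSingular.not_pMinusSingular (h : pPlusSingular D p) : ¬ pMinusSingular D p := by
  obtain ⟨h₁, h₂⟩ := h
  rintro ⟨h₃, h₄, h₅⟩
  omega

theorem bsign_of_pPlusSingular (h : pPlusSingular D p) : bsign D p = 1 := by
  simp [bsign, h]

theorem bsign_of_pMinusSingular (h : pMinusSingular D p) : bsign D p = -1 := by
  simp [bsign, h, mt pPlusSingular.not_pMinusSingular (not_not.2 h)]

theorem bsign_of_not_singular (h₁ : ¬ pPlusSingular D p) (h₂ : ¬ pMinusSingular D p) :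
    bsign D p = 0 := by
  simp [bsign, h₁, h₂]

theorem signMul_self (a : ℤ) : signMul a a = a := by
  unfold signMul
  split_ifs <;> simp_all

theorem boxplus_self_Q (D : Bock → ℕ) : boxplus D D .Q = 2 * D .Q :=
  (two_mul _).symm

theorem boxplus_self_Zp (D : Bock → ℕ) (p : Nat.Primes) :
    boxplus D D (.Zp p) = 2 * D (.Zp p) :=
  (two_mul _).symm

theorem boxplus_self_Zloc_of_pPlusSingular (h : pPlusSingular D p) :
    boxplus D D (.Zloc p) = max (2 * D .Q) (2 * D (.Zp p) + 1) := by
  simp [boxplus, signMul_self, bsign_of_pPlusSingular h, two_mul]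

theorem boxplus_self_Zloc_of_pMinusSingular (h : pMinusSingular D p) :
    boxplus D D (.Zloc p) = max (2 * D .Q) (2 * D (.Zp p)) := by
  simp [boxplus, signMul_self, bsign_of_pMinusSingular h, two_mul]

theorem boxplus_self_ZpInf_le (D : Bock → ℕ) (p : Nat.Primes) :
    boxplus D D (.ZpInf p) ≤ max (2 * D .Q) (2 * D (.Zp p)) := by
  by_cases hplus : pPlusSingular D p
  · simp [boxplus, signMul_self, bsign_of_pPlusSingular hplus, two_mul]
  by_cases hminus : pMinusSingular D p
  · simp [boxplus, signMul_self, bsign_of_pMinusSingular hminus, two_mul]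
  · simp [boxplus, signMul_self, bsign_of_not_singular hplus hminus, two_mul]

theorem boxplus_self_Zloc_le (D : Bock → ℕ) (p : Nat.Primes) :
    boxplus D D (.Zloc p) ≤ max (2 * D .Q) (D (.Zp p) + D (.Zloc p)) := by
  by_cases hplus : pPlusSingular D p
  · rw [boxplus_self_Zloc_of_pPlusSingular hplus]
    obtain ⟨h₁, h₂⟩ := hplus
    omega
  by_cases hminus : pMinusSingular D p
  · rw [boxplus_self_Zloc_of_pMinusSingular hminus]
    obtain ⟨h₁, h₂, h₃⟩ := hminus
    omega
  · simp [boxplus, signMul_self, bsign_of_not_singular hplus hminus, two_mul]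

theorem boxplus_self_le_add {a b : ℕ} (hab : a ≤ b) (hQ : D .Q ≤ a)
    (hZp : ∀ p, D (.Zp p) ≤ a) (hZloc : ∀ p, D (.Zloc p) ≤ b) (G : Bock) :
    boxplus D D G ≤ a + b := by
  cases G with
  | Q => rw [boxplus_self_Q]; omega
  | Zp p => rw [boxplus_self_Zp]; have := hZp p; omega
  | ZpInf p => have := boxplus_self_ZpInf_le D p; have := hZp p; omega
  | Zloc p => have := boxplus_self_Zloc_le D p; have := hZp p; have := hZloc p; omega

theorem exists_eq_of_not_dle_Bolt (hD : DimensionType D) (hbound : ∀ G, D G ≤ n)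
    (h : ¬ dle D (Bolt n)) : D .Q = n ∨ ∃ p, D (.Zp p) = n := by
  obtain ⟨G, hG⟩ := not_forall.1 h
  cases G with
  | Q => exact .inl (by have := hbound .Q; simp only [Bolt] at hG; omega)
  | Zp p => exact .inr ⟨p, by have := hbound (.Zp p); simp only [Bolt] at hG; omega⟩
  | ZpInf p =>
    have hZpInf : D (.ZpInf p) = n := by have := hbound (.ZpInf p); simp only [Bolt] at hG; omega
    rcases hD p with ⟨-, h₁, h₂⟩ | ⟨h₁, -⟩ | ⟨-, h₁, -⟩
    · exact .inl (by omega)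
    · exact .inr ⟨p, by omega⟩
    · have := hbound (.Zp p); omega
  | Zloc p => have := hbound (.Zloc p); simp only [Bolt] at hG; omega

theorem exists_pPlusSingular_of_dle_Bolt (hD : DimensionType D) (hn : 1 ≤ n)
    (hdim : dimEq D n) (h : dle D (Bolt n)) : ∃ p, pPlusSingular D p ∧ D (.Zp p) + 1 = n := by
  obtain ⟨-, G, hG⟩ := hdim
  have hGle := h G
  cases G with
  | Zloc p =>
    have hQ := h .Q
    have hZp := h (.Zp p)
    simp only [Bolt] at hQ hZp
    rcases hD p with ⟨h₁, h₂, h₃⟩ | hplus | ⟨h₁, h₂, h₃⟩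
    · omega
    · exact ⟨p, hplus, by obtain ⟨h₁, h₂⟩ := hplus; omega⟩
    · omega
  | _ => simp only [Bolt] at hGle; omega

theorem dimEq.unique {f : Bock → ℕ} {a b : ℕ} (ha : dimEq f a) (hb : dimEq f b) : a = b := by
  obtain ⟨ha, G, rfl⟩ := ha
  obtain ⟨hb, G', rfl⟩ := hb
  exact le_antisymm (hb G) (ha G')

theorem dimEq_boxplus_self_of_not_dle_Bolt (hD : DimensionType D) (hdim : dimEq D n)
    (h : ¬ dle D (Bolt n)) : dimEq (boxplus D D) (2 * n) := by
  refine ⟨fun G => (boxplus_self_le_add le_rfl (hdim.1 _) (fun _ => hdim.1 _)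
    (fun _ => hdim.1 _) G).trans_eq (two_mul n).symm, ?_⟩
  rcases exists_eq_of_not_dle_Bolt hD hdim.1 h with hQ | ⟨p, hZp⟩
  · exact ⟨.Q, by rw [boxplus_self_Q, hQ]⟩
  · exact ⟨.Zp p, by rw [boxplus_self_Zp, hZp]⟩

theorem dimEq_boxplus_self_of_dle_Bolt (hD : DimensionType D) (hn : 1 ≤ n)
    (hdim : dimEq D n) (h : dle D (Bolt n)) : dimEq (boxplus D D) (2 * n - 1) := by
  refine ⟨fun G => ?_, ?_⟩
  · have := boxplus_self_le_add (Nat.sub_le n 1) (h .Q) (fun p => h (.Zp p))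
      (fun p => h (.Zloc p)) G
    omega
  · obtain ⟨p, hplus, hZp⟩ := exists_pPlusSingular_of_dle_Bolt hD hn hdim h
    refine ⟨.Zloc p, ?_⟩
    have hQ : D .Q ≤ n - 1 := h .Q
    rw [boxplus_self_Zloc_of_pPlusSingular hplus]
    omega

end

/-- Let D be a dimension type with dim D = n, n ≥ 1. Then
dim(D ⊞ D) = 2n − 1 iff D ≤ B_n; otherwise dim(D ⊞ D) = 2n. -/
theorem boltyanskii_characterization (D : Bock → ℕ) (hD : DimensionType D)
    (n : ℕ) (hn : 1 ≤ n) (hdim : dimEq D n) :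
    (dimEq (boxplus D D) (2 * n - 1) ↔ dle D (Bolt n)) ∧
    (¬ dle D (Bolt n) → dimEq (boxplus D D) (2 * n)) := by
  have h2n := dimEq_boxplus_self_of_not_dle_Bolt hD hdim
  refine ⟨⟨fun h => ?_, dimEq_boxplus_self_of_dle_Bolt hD hn hdim⟩, h2n⟩
  by_contra hle
  have := h.unique (h2n hle)
  omega
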